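/- Let k ∈ ℕ and write k = r(q-1) + s with r ∈ ℕ and 0 ≤ s < q-1. The affine Reed–Muller code RM(k,2,q) ⊆ F_q^{q^2} has minimum distance q(q-s) if r = 0, minimum distance q-s if r = 1, and minimum distance 1 if r ≥ 2. -/

import Mathlib

noncomputable def dualCode (F : Type*) [Field F] {ι : Type*} [Fintype ι]
    (C : Submodule F (ι → F)) : Submodule F (ι → F) where
  carrier := {x | ∀ c ∈ C, ∑ i, x i * c i = 0}
  zero_mem' := by intro c _; simp
  add_mem' := by
    intro x y hx hy c hc
    simp only [Pi.add_apply, add_mul, Finset.sum_add_distrib]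
    rw [hx c hc, hy c hc, add_zero]
  smul_mem' := by
    intro a x hx c hc
    simp only [Pi.smul_apply, smul_eq_mul, mul_assoc, ← Finset.mul_sum]
    rw [hx c hc, mul_zero]

noncomputable def minDist (F : Type*) [Field F] {ι : Type*} [Fintype ι] [DecidableEq F]
    (C : Submodule F (ι → F)) : ℕ :=
  sInf {w | ∃ c ∈ C, c ≠ 0 ∧ hammingNorm c = w}

/-- The weight of a matrix codeword: the number of nonzero entries. -/
noncomputable def wt2 {F : Type*} [Zero F] [DecidableEq F] {ι₁ ι₂ : Type*} [Fintype ι₁]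
    [Fintype ι₂] (m : ι₂ → ι₁ → F) : ℕ :=
  hammingNorm (fun p : ι₂ × ι₁ => m p.1 p.2)

noncomputable def minDist2 (F : Type*) [Field F] [DecidableEq F] {ι₁ ι₂ : Type*} [Fintype ι₁]
    [Fintype ι₂] (C : Submodule F (ι₂ → ι₁ → F)) : ℕ :=
  sInf {w | ∃ m ∈ C, m ≠ 0 ∧ wt2 m = w}

noncomputable def dualCode2 (F : Type*) [Field F] {ι₁ ι₂ : Type*} [Fintype ι₁] [Fintype ι₂]
    (C : Submodule F (ι₂ → ι₁ → F)) : Submodule F (ι₂ → ι₁ → F) where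
  carrier := {x | ∀ c ∈ C, ∑ i, ∑ j, x i j * c i j = 0}
  zero_mem' := by intro c _; simp
  add_mem' := by
    intro x y hx hy c hc
    simp only [Pi.add_apply, add_mul, Finset.sum_add_distrib]
    rw [hx c hc, hy c hc, add_zero]
  smul_mem' := by
    intro a x hx c hc
    simp only [Pi.smul_apply, smul_eq_mul, mul_assoc, ← Finset.mul_sum]
    rw [hx c hc, mul_zero]

/-- The affine Reed–Muller code `RM(k,2,q)`: evaluations of polynomials in two variables of
total degree at most `k` at all points of `F × F`. -/
noncomputable def RM (F : Type*) [Field F] (k : ℕ) : Submodule F (F → F → F) :=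
  (MvPolynomial.restrictTotalDegree (Fin 2) F k).map
    (LinearMap.pi fun x : F => LinearMap.pi fun t : F =>
      (MvPolynomial.aeval ![x, t]).toLinearMap)

/-!
A nonzero codeword is the evaluation of a bivariate polynomial `P` of total degree `≤ k` whose
degree in each variable is `< q` (reduce exponents using `x ^ q = x`). If `P` has degree `d` in `t`
and its leading coefficient `g(x)` has degree `b`, then `g` has at least `q - b` non-roots `x`, and
for each of them `P(x, ·)` has degree `d`, hence at least `q - d` non-roots: the weight is at least
`(q - b) * (q - d)`. Conversely `∏_{α ∈ A} (x - α) * ∏_{β ∈ B} (t - β)` has weight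
`(q - #A) * (q - #B)`. So the minimum distance is the minimum of `(q - a) * (q - b)` over
`a, b < q`, `a + b ≤ k`, which is elementary to compute.
-/

open Polynomial Finset

namespace Polynomial

variable {R : Type*} [CommRing R] [IsDomain R] [Fintype R] [DecidableEq R]

theorem card_sub_natDegree_le_card_eval_ne_zero {p : R[X]} (hp : p ≠ 0) :
    Fintype.card R - p.natDegree ≤ #{x | p.eval x ≠ 0} := by
  have hroots : #{x | p.eval x = 0} ≤ p.natDegree :=
    card_le_degree_of_subset_roots fun x hx => by simpa [mem_roots hp] using hx
  have := card_filter_add_card_filter_not (s := univ) (p := fun x => p.eval x = 0)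
  rw [card_univ] at this
  simp only [ne_eq]
  omega

theorem card_mul_le_card_evalEval_ne_zero {P : R[X][X]} (hP : P ≠ 0) :
    (Fintype.card R - P.leadingCoeff.natDegree) * (Fintype.card R - P.natDegree) ≤
      #{xy : R × R | P.evalEval xy.1 xy.2 ≠ 0} := by
  set g := P.leadingCoeff
  have hrow : ∀ x, g.eval x ≠ 0 →
      Fintype.card R - P.natDegree ≤ #{y | P.evalEval x y ≠ 0} := by
    intro x hx
    have hdeg : (P.map (evalRingHom x)).natDegree = P.natDegree :=
      natDegree_map_of_leadingCoeff_ne_zero _ hx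
    have hne : P.map (evalRingHom x) ≠ 0 := fun h => hx (by
      simpa [g, coeff_map, hdeg] using congrArg (coeff · P.natDegree) h)
    simpa only [hdeg, map_evalRingHom_eval] using card_sub_natDegree_le_card_eval_ne_zero hne
  calc (Fintype.card R - g.natDegree) * (Fintype.card R - P.natDegree)
      ≤ ∑ _x ∈ univ.filter (fun x => g.eval x ≠ 0), (Fintype.card R - P.natDegree) := by
        rw [sum_const, smul_eq_mul]
        exact Nat.mul_le_mul_right _
          (card_sub_natDegree_le_card_eval_ne_zero (leadingCoeff_ne_zero.mpr hP))
    _ ≤ ∑ x ∈ univ.filter (fun x => g.eval x ≠ 0), #{y | P.evalEval x y ≠ 0} :=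
        sum_le_sum fun x hx => hrow x (mem_filter.mp hx).2
    _ ≤ ∑ x, #{y | P.evalEval x y ≠ 0} := sum_le_sum_of_subset (filter_subset _ _)
    _ = #{xy : R × R | P.evalEval xy.1 xy.2 ≠ 0} := by
        simp only [card_filter, Fintype.sum_prod_type]

end Polynomial

/-- The exponent `e < q` with `x ^ e = x ^ a` on a field with `q` elements. It is `0` only for
`a = 0`, because `0 ^ 0 ≠ 0 ^ a`. -/
def reduceExp (q a : ℕ) : ℕ := if a = 0 then 0 else (a - 1) % (q - 1) + 1

theorem reduceExp_le (q a : ℕ) : reduceExp q a ≤ a := by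
  unfold reduceExp
  split_ifs
  · omega
  · have := Nat.mod_le (a - 1) (q - 1); omega

theorem reduceExp_lt {q : ℕ} (hq : 1 < q) (a : ℕ) : reduceExp q a < q := by
  unfold reduceExp
  split_ifs
  · omega
  · have := Nat.mod_lt (a - 1) (show 0 < q - 1 by omega); omega

theorem FiniteField.pow_reduceExp {F : Type*} [Field F] [Fintype F] (x : F) (a : ℕ) :
    x ^ reduceExp (Fintype.card F) a = x ^ a := by
  rcases eq_or_ne a 0 with rfl | ha
  · simp [reduceExp]
  rcases eq_or_ne x 0 with rfl | hx
  · simp [reduceExp, ha]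
  have hsplit : a = reduceExp (Fintype.card F) a +
      (Fintype.card F - 1) * ((a - 1) / (Fintype.card F - 1)) := by
    have := Nat.mod_add_div (a - 1) (Fintype.card F - 1)
    simp only [reduceExp, ha, if_false]
    omega
  conv_rhs => rw [hsplit, pow_add, pow_mul, FiniteField.pow_card_sub_one_eq_one x hx, one_pow,
    mul_one]

section ReedMuller

variable {F : Type*} [Field F] [Fintype F]

theorem exists_evalEval_eq_of_mem_RM {k : ℕ} {f : F → F → F} (hf : f ∈ RM F k) :
    ∃ P : F[X][X], (∀ i j, (P.coeff i).coeff j ≠ 0 →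
      i < Fintype.card F ∧ j < Fintype.card F ∧ i + j ≤ k) ∧
      f = fun x t => P.evalEval x t := by
  obtain ⟨Q, hQ, rfl⟩ := hf
  rw [SetLike.mem_coe, MvPolynomial.mem_restrictTotalDegree] at hQ
  have hdeg : ∀ m ∈ Q.support, m 0 + m 1 ≤ k := fun m hm => by
    simpa [Finsupp.sum_fintype, Fin.sum_univ_two] using
      (MvPolynomial.le_totalDegree hm).trans hQ
  set red := reduceExp (Fintype.card F)
  have hred : ∀ a, red a < Fintype.card F := reduceExp_lt Fintype.one_lt_card
  refine ⟨∑ m ∈ Q.support, monomial (red (m 1)) (monomial (red (m 0)) (Q.coeff m)), ?_, ?_⟩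
  · intro i j hij
    simp only [finsetSum_coeff, coeff_monomial] at hij
    obtain ⟨m, hm, hne⟩ := exists_ne_zero_of_sum_ne_zero hij
    obtain ⟨rfl, rfl⟩ : red (m 1) = i ∧ red (m 0) = j := by
      by_contra h
      rcases not_and_or.mp h with h | h <;> split_ifs at hne <;> simp_all [coeff_monomial]
    have := hdeg m hm
    exact ⟨hred _, hred _, by
      linarith [reduceExp_le (Fintype.card F) (m 0), reduceExp_le (Fintype.card F) (m 1)]⟩
  · funext x t
    simp only [LinearMap.pi_apply, AlgHom.toLinearMap_apply, MvPolynomial.aeval_def,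
      MvPolynomial.eval₂_eq', evalEval_finsetSum]
    refine sum_congr rfl fun m _ => ?_
    simp only [evalEval, eval_monomial, eval_mul, eval_pow, eval_C, red,
      FiniteField.pow_reduceExp, Fin.prod_univ_two, Matrix.cons_val_zero, Matrix.cons_val_one,
      Algebra.algebraMap_self, RingHom.id_apply]
    ring

variable [DecidableEq F]

theorem exists_le_wt2_of_mem_RM {k : ℕ} {f : F → F → F} (hf : f ∈ RM F k) (hf0 : f ≠ 0) :
    ∃ a b, a < Fintype.card F ∧ b < Fintype.card F ∧ a + b ≤ k ∧
      (Fintype.card F - a) * (Fintype.card F - b) ≤ wt2 f := by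
  obtain ⟨P, hsupp, rfl⟩ := exists_evalEval_eq_of_mem_RM hf
  have hP : P ≠ 0 := by
    rintro rfl
    exact hf0 (funext fun x => funext fun t => evalEval_zero x t)
  obtain ⟨hb, ha, hab⟩ := hsupp P.natDegree P.leadingCoeff.natDegree
    (leadingCoeff_ne_zero.mpr (leadingCoeff_ne_zero.mpr hP))
  exact ⟨_, _, ha, hb, by omega, card_mul_le_card_evalEval_ne_zero hP⟩

theorem exists_mem_RM_wt2_eq {k a b : ℕ} (ha : a ≤ Fintype.card F) (hb : b ≤ Fintype.card F)
    (hab : a + b ≤ k) :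
    ∃ f ∈ RM F k, wt2 f = (Fintype.card F - a) * (Fintype.card F - b) := by
  obtain ⟨A, -, rfl⟩ := exists_subset_card_eq (s := (univ : Finset F)) ha
  obtain ⟨B, -, rfl⟩ := exists_subset_card_eq (s := (univ : Finset F)) hb
  have hdeg : ∀ (i : Fin 2) (S : Finset F),
      (∏ c ∈ S, (MvPolynomial.X i - MvPolynomial.C c)).totalDegree ≤ #S := fun i S =>
    (MvPolynomial.totalDegree_finsetProd _ _).trans <| by
      simpa using sum_le_sum fun c _ =>
        (MvPolynomial.totalDegree_sub_C_le (MvPolynomial.X i : MvPolynomial (Fin 2) F) c).trans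
          (MvPolynomial.totalDegree_X i).le
  refine ⟨_, ⟨(∏ c ∈ A, (MvPolynomial.X 0 - MvPolynomial.C c)) *
      ∏ c ∈ B, (MvPolynomial.X 1 - MvPolynomial.C c), ?_, rfl⟩, ?_⟩
  · rw [SetLike.mem_coe, MvPolynomial.mem_restrictTotalDegree]
    exact (MvPolynomial.totalDegree_mul _ _).trans
      ((add_le_add (hdeg 0 A) (hdeg 1 B)).trans hab)
  · have hnonzero : ({p : F × F | (∏ c ∈ A, (p.1 - c)) * ∏ c ∈ B, (p.2 - c) ≠ 0} : Finset _)
        = Aᶜ ×ˢ Bᶜ := by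
      ext p
      simp [prod_ne_zero_iff, sub_ne_zero]
    simp only [wt2, hammingNorm, LinearMap.pi_apply, AlgHom.toLinearMap_apply, map_mul, map_prod,
      map_sub, MvPolynomial.aeval_X, MvPolynomial.aeval_C, Matrix.cons_val_zero,
      Matrix.cons_val_one, Algebra.algebraMap_self, RingHom.id_apply]
    rw [hnonzero, card_product, card_compl, card_compl]

theorem minDist2_RM_eq_sInf (k : ℕ) :
    minDist2 F (RM F k) = sInf {n | ∃ a b, a < Fintype.card F ∧ b < Fintype.card F ∧
      a + b ≤ k ∧ (Fintype.card F - a) * (Fintype.card F - b) = n} := by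
  set S := {n | ∃ a b, a < Fintype.card F ∧ b < Fintype.card F ∧ a + b ≤ k ∧
      (Fintype.card F - a) * (Fintype.card F - b) = n}
  obtain ⟨a, b, ha, hb, hab, hmin⟩ : sInf S ∈ S :=
    Nat.sInf_mem (⟨_, 0, 0, Fintype.card_pos, Fintype.card_pos, k.zero_le, rfl⟩ : S.Nonempty)
  rw [← hmin]
  refine IsLeast.csInf_eq ⟨?_, ?_⟩
  · obtain ⟨f, hf, hwt⟩ := exists_mem_RM_wt2_eq ha.le hb.le hab
    refine ⟨f, hf, ?_, hwt⟩
    rintro rfl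
    exact Nat.mul_ne_zero (by omega) (by omega) (hwt.symm.trans hammingNorm_zero)
  · rintro _ ⟨f, hf, hf0, rfl⟩
    obtain ⟨a', b', ha', hb', hab', hle⟩ := exists_le_wt2_of_mem_RM hf hf0
    calc _ = sInf S := hmin
      _ ≤ _ := Nat.sInf_le ⟨a', b', ha', hb', hab', rfl⟩
      _ ≤ wt2 f := hle

end ReedMuller

/-- minimum distance of the affine Reed–Muller code `RM(k,2,q)` where
`k = r(q-1) + s` with `0 ≤ s < q-1`: it is `q(q-s)` if `r = 0`, `q-s` if `r = 1`, and `1`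
if `r ≥ 2`. -/
theorem RM_minDist (F : Type*) [Field F] [Fintype F] [DecidableEq F] (q k r s : ℕ)
    (hq : Fintype.card F = q) (hk : k = r * (q - 1) + s) (hs : s < q - 1) :
    (r = 0 → minDist2 F (RM F k) = q * (q - s)) ∧
    (r = 1 → minDist2 F (RM F k) = q - s) ∧
    (2 ≤ r → minDist2 F (RM F k) = 1) := by
  subst hk
  rw [minDist2_RM_eq_sInf, hq]
  refine ⟨?_, ?_, fun hr => ?_⟩
  · rintro rfl
    refine IsLeast.csInf_eq
      ⟨⟨s, 0, by omega, by omega, by simp, by rw [Nat.sub_zero, mul_comm]⟩, ?_⟩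
    rintro _ ⟨a, b, ha, hb, hab, rfl⟩
    replace hab : a + b ≤ s := by simpa using hab
    zify [ha.le, hb.le, show s ≤ q by omega] at hab ⊢
    nlinarith
  · rintro rfl
    refine IsLeast.csInf_eq ⟨⟨q - 1, s, by omega, by omega, by simp,
      by rw [show q - (q - 1) = 1 by omega, one_mul]⟩, ?_⟩
    rintro _ ⟨a, b, ha, hb, hab, rfl⟩
    replace hab : a + b ≤ q - 1 + s := by simpa using hab
    zify [ha.le, hb.le, show s ≤ q by omega, show 1 ≤ q by omega] at hab ⊢
    nlinarith
  · have : 2 * (q - 1) ≤ r * (q - 1) := Nat.mul_le_mul_right _ hr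
    refine IsLeast.csInf_eq ⟨⟨q - 1, q - 1, by omega, by omega, by omega,
      by rw [show q - (q - 1) = 1 by omega]⟩, ?_⟩
    rintro _ ⟨a, b, ha, hb, -, rfl⟩
    exact Nat.mul_pos (by omega) (by omega)
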